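/- Let f : ℝ^N → ℝ^N be given by f(θ) = ∇L(θ) with invertible Jacobian H at a point θ, and suppose α := β·γ < 1/4 where β = ‖H⁻¹ f(θ)‖ and the Newton iteration θ_{k+1} = θ_k − H(θ_k)⁻¹ f(θ_k) is well-defined. Then under the hypotheses of the Newton–Kantorovich theorem (with Lipschitz Hessian of L on a ball of radius 2β around θ, with Lipschitz constant K satisfying β·K·‖H⁻¹‖ ≤ 1/4), there exists a zero of f, i.e. a critical point of L, within distance 2β of θ. -/

import Mathlib

/-!
Newton's method with the derivative frozen at `θ` (the chord method) replaces `f(x) = 0` by the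
fixed-point problem for `g(x) = x - A (f x)`, where `A` inverts `f'(θ)`. Since
`g'(x) = A ∘ (f'(θ) - f'(x))`, the Lipschitz bound on `f'` makes `g` a contraction of ratio
`‖A‖ K r ≤ 1/2` on the ball of radius `r = 2β`, and `‖g θ - θ‖ = β = (1 - 1/2) r` keeps the ball
invariant, so the contraction mapping principle yields the zero.
-/

open Metric Set Function
open scoped NNReal

theorem ContDiff.gradient {F : Type*} [NormedAddCommGroup F] [InnerProductSpace ℝ F]
    [CompleteSpace F] {f : F → ℝ} {m n : WithTop ℕ∞} (hf : ContDiff ℝ n f) (hmn : m + 1 ≤ n) :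
    ContDiff ℝ m (gradient f) := by
  have hgrad : _root_.gradient f = (InnerProductSpace.toDual ℝ F).symm ∘ fderiv ℝ f := rfl
  rw [hgrad]
  exact (InnerProductSpace.toDual ℝ F).symm.contDiff.comp (hf.fderiv_right hmn)

theorem LipschitzOnWith.mapsTo_closedBall {α : Type*} [PseudoMetricSpace α] {g : α → α}
    {q : ℝ≥0} {θ : α} {r : ℝ} (hg : LipschitzOnWith q g (closedBall θ r))
    (hθ : dist (g θ) θ ≤ (1 - q) * r) : MapsTo g (closedBall θ r) (closedBall θ r) := by
  intro x hx
  have hxθ : dist x θ ≤ r := hx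
  have hθ_mem : θ ∈ closedBall θ r := mem_closedBall_self (dist_nonneg.trans hxθ)
  rw [mem_closedBall]
  calc dist (g x) θ ≤ dist (g x) (g θ) + dist (g θ) θ := dist_triangle _ _ _
    _ ≤ q * dist x θ + (1 - q) * r := add_le_add (hg.dist_le_mul x hx θ hθ_mem) hθ
    _ ≤ q * r + (1 - q) * r := by gcongr
    _ = r := by ring

theorem LipschitzOnWith.exists_mem_closedBall_isFixedPt {α : Type*} [MetricSpace α]
    [CompleteSpace α] {g : α → α} {q : ℝ≥0} {θ : α} {r : ℝ}
    (hg : LipschitzOnWith q g (closedBall θ r)) (hq : q < 1)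
    (hθ : dist (g θ) θ ≤ (1 - q) * r) (hr : 0 ≤ r) :
    ∃ x ∈ closedBall θ r, IsFixedPt g x := by
  have hmaps := hg.mapsTo_closedBall hθ
  obtain ⟨x, hx, hfix, -⟩ := ContractingWith.exists_fixedPoint' isClosed_closedBall.isComplete
    hmaps ⟨hq, hg.mapsToRestrict hmaps⟩ (mem_closedBall_self hr) (edist_ne_top _ _)
  exact ⟨x, hx, hfix⟩

section ChordMethod

variable {E F : Type*} [NormedAddCommGroup E] [NormedSpace ℝ E] [NormedAddCommGroup F]
  [NormedSpace ℝ F] {f : E → F} {A : F →L[ℝ] E} {θ x : E}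

def chordMap (A : F →L[ℝ] E) (f : E → F) (x : E) : E := x - A (f x)

theorem isFixedPt_chordMap_iff (hA : Injective A) : IsFixedPt (chordMap A f) x ↔ f x = 0 := by
  rw [IsFixedPt, chordMap, sub_eq_self, map_eq_zero_iff A hA]

theorem hasFDerivAt_chordMap {f' : E →L[ℝ] F} (hf : HasFDerivAt f f' x) :
    HasFDerivAt (chordMap A f) (.id ℝ E - A ∘L f') x :=
  (hasFDerivAt_id x).sub (A.hasFDerivAt.comp x hf)

theorem fderiv_chordMap (hA : A ∘L fderiv ℝ f θ = .id ℝ E) (hf : DifferentiableAt ℝ f x) :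
    fderiv ℝ (chordMap A f) x = A ∘L (fderiv ℝ f θ - fderiv ℝ f x) := by
  rw [(hasFDerivAt_chordMap hf.hasFDerivAt).fderiv, ContinuousLinearMap.comp_sub, hA]

theorem lipschitzOnWith_chordMap {K q : ℝ≥0} {r : ℝ} (hA : A ∘L fderiv ℝ f θ = .id ℝ E)
    (hf : ∀ x ∈ closedBall θ r, DifferentiableAt ℝ f x)
    (hLip : LipschitzOnWith K (fderiv ℝ f) (closedBall θ r)) (hr : ‖A‖ * K * r ≤ q) :
    LipschitzOnWith q (chordMap A f) (closedBall θ r) := by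
  refine (convex_closedBall θ r).lipschitzOnWith_of_nnnorm_fderiv_le
    (fun x hx => (hasFDerivAt_chordMap (hf x hx).hasFDerivAt).differentiableAt) fun x hx => ?_
  have hθ_mem : θ ∈ closedBall θ r := mem_closedBall_self (dist_nonneg.trans hx)
  have hdist : dist θ x ≤ r := mem_closedBall'.1 hx
  rw [← NNReal.coe_le_coe, coe_nnnorm, fderiv_chordMap hA (hf x hx)]
  calc ‖A ∘L (fderiv ℝ f θ - fderiv ℝ f x)‖ ≤ ‖A‖ * ‖fderiv ℝ f θ - fderiv ℝ f x‖ :=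
        A.opNorm_comp_le _
    _ ≤ ‖A‖ * (K * r) := by
        rw [← dist_eq_norm]
        gcongr
        exact (hLip.dist_le_mul θ hθ_mem x hx).trans (by gcongr)
    _ ≤ q := by rwa [← mul_assoc]

theorem exists_mem_closedBall_eq_zero_of_lipschitzOnWith_fderiv [CompleteSpace E]
    {K q : ℝ≥0} {r : ℝ} (hA : A ∘L fderiv ℝ f θ = .id ℝ E) (hA_inj : Injective A)
    (hf : ∀ x ∈ closedBall θ r, DifferentiableAt ℝ f x)
    (hLip : LipschitzOnWith K (fderiv ℝ f) (closedBall θ r)) (hq : q < 1)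
    (hr : ‖A‖ * K * r ≤ q) (hθ : ‖A (f θ)‖ ≤ (1 - q) * r) :
    ∃ x ∈ closedBall θ r, f x = 0 := by
  have hr₀ : 0 ≤ r := nonneg_of_mul_nonneg_right ((norm_nonneg _).trans hθ)
    (sub_pos.2 (NNReal.coe_lt_one.2 hq))
  have hθ' : dist (chordMap A f θ) θ ≤ (1 - q) * r := by
    rwa [dist_eq_norm, chordMap, sub_sub_cancel_left, norm_neg]
  obtain ⟨x, hx, hfix⟩ :=
    (lipschitzOnWith_chordMap hA hf hLip hr).exists_mem_closedBall_isFixedPt hq hθ' hr₀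
  exact ⟨x, hx, (isFixedPt_chordMap_iff hA_inj).1 hfix⟩

end ChordMethod

theorem newton_kantorovich_critical_point (N : ℕ)
    (L : EuclideanSpace ℝ (Fin N) → ℝ) (hL : ContDiff ℝ 2 L)
    (θ : EuclideanSpace ℝ (Fin N))
    (H : EuclideanSpace ℝ (Fin N) →L[ℝ] EuclideanSpace ℝ (Fin N))
    (hH : H = fderiv ℝ (fun x => gradient L x) θ)
    (Hinv : EuclideanSpace ℝ (Fin N) →L[ℝ] EuclideanSpace ℝ (Fin N))
    (hHinv₁ : Hinv.comp H = ContinuousLinearMap.id ℝ _)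
    (hHinv₂ : H.comp Hinv = ContinuousLinearMap.id ℝ _)
    (β : ℝ) (hβ : β = ‖Hinv (gradient L θ)‖)
    (K : NNReal)
    (hLip : LipschitzOnWith K (fun x => fderiv ℝ (fun y => gradient L y) x)
      (closedBall θ (2 * β)))
    (hαK : β * K * ‖Hinv‖ ≤ 1 / 4) :
    ∃ θ' : EuclideanSpace ℝ (Fin N), ‖θ' - θ‖ ≤ 2 * β ∧ gradient L θ' = 0 := by
  have hdiff : Differentiable ℝ (gradient L) :=
    (hL.gradient (m := 1) (by norm_num)).differentiable one_ne_zero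
  have hinj : Injective Hinv := LeftInverse.injective fun y => congrArg (· y) hHinv₂
  obtain ⟨θ', hθ', hzero⟩ := exists_mem_closedBall_eq_zero_of_lipschitzOnWith_fderiv
    (hH ▸ hHinv₁) hinj (fun x _ => hdiff x) hLip (q := 2⁻¹) (by norm_num)
    (by push_cast; linarith) (by push_cast; linarith)
  exact ⟨θ', mem_closedBall_iff_norm.1 hθ', hzero⟩
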